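/- arXiv:1907.08063 — 3 statements merged into one kernel-verified Lean document; each statement's English description precedes it below -/
import Mathlib

section
/- The function $g(p) = 1 + 2\log_2\frac{p}{1-p} - \log_2\frac{1-2p}{1-p} - H_2(p)$ is strictly increasing on $(0, 1/2)$ and has exactly one zero $p^* \in (0, 1/2)$. -/
/-!
Multiplying by `log 2`, the function becomes `log 2 + L p` with
`L p = (2 + p) log p - p log (1 - p) - log (1 - 2p)`. Its derivative
`log p + (2 + p)/p - log (1 - p) + p/(1 - p) + 2/(1 - 2p)` is positive on `(0, 1/2)`, because
`log p ≥ 1 - 1/p` makes the first two terms at least `2 + 1/p` and the others are nonnegative.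
So the function is strictly increasing, and it changes sign between `1/4` and `2/5`
(the latter because `3² · 5⁵ < 2¹⁷`).
-/

open Real Set

noncomputable def binEnt (x : ℝ) : ℝ := -(x * Real.logb 2 x) - (1 - x) * Real.logb 2 (1 - x)

noncomputable def tightnessGap (p : ℝ) : ℝ :=
  1 + 2 * logb 2 (p / (1 - p)) - logb 2 ((1 - 2 * p) / (1 - p)) - binEnt p

noncomputable def tightnessGapLog (p : ℝ) : ℝ :=
  (2 + p) * log p - p * log (1 - p) - log (1 - 2 * p)

lemma tightnessGap_eq {p : ℝ} (hp : p ≠ 0) (hp₁ : 1 - p ≠ 0) (hp₂ : 1 - 2 * p ≠ 0) :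
    tightnessGap p = 1 + tightnessGapLog p / log 2 := by
  simp only [tightnessGap, tightnessGapLog, binEnt, logb, log_div hp hp₁, log_div hp₂ hp₁]
  field_simp
  ring

noncomputable def tightnessGapLogDeriv (p : ℝ) : ℝ :=
  log p + (2 + p) / p - log (1 - p) + p / (1 - p) + 2 / (1 - 2 * p)

lemma hasDerivAt_tightnessGapLog {p : ℝ} (hp : p ≠ 0) (hp₁ : 1 - p ≠ 0)
    (hp₂ : 1 - 2 * p ≠ 0) : HasDerivAt tightnessGapLog (tightnessGapLogDeriv p) p := by
  have hlog : HasDerivAt log p⁻¹ p := hasDerivAt_log hp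
  have hlog₁ : HasDerivAt (fun q => log (1 - q)) (-1 / (1 - p)) p := by
    simpa using ((hasDerivAt_id p).const_sub 1).log hp₁
  have hlog₂ : HasDerivAt (fun q => log (1 - 2 * q)) (-2 / (1 - 2 * p)) p := by
    simpa using (((hasDerivAt_id p).const_mul 2).const_sub 1).log hp₂
  refine ((((hasDerivAt_id' p).const_add 2).mul hlog).sub ((hasDerivAt_id' p).mul hlog₁)
    |>.sub hlog₂).congr_deriv ?_
  rw [tightnessGapLogDeriv]
  field_simp
  ring

lemma tightnessGapLogDeriv_pos {p : ℝ} (hp : 0 < p) (hp₂ : p < 1 / 2) :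
    0 < tightnessGapLogDeriv p := by
  have hlog : 1 - p⁻¹ ≤ log p := one_sub_inv_le_log_of_pos hp
  have hlog₁ : log (1 - p) ≤ 0 := log_nonpos (by linarith) (by linarith)
  have hfrac : (2 + p) / p = 2 * p⁻¹ + 1 := by field_simp
  have : 0 < p⁻¹ := inv_pos.mpr hp
  have : 0 ≤ p / (1 - p) := div_nonneg hp.le (by linarith)
  have : 0 < 2 / (1 - 2 * p) := div_pos two_pos (by linarith)
  rw [tightnessGapLogDeriv]
  linarith

lemma hasDerivAt_tightnessGapLog_of_mem {p : ℝ} (hp : p ∈ Ioo (0 : ℝ) (1 / 2)) :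
    HasDerivAt tightnessGapLog (tightnessGapLogDeriv p) p :=
  hasDerivAt_tightnessGapLog hp.1.ne' (by linarith [hp.2]) (by linarith [hp.2])

lemma continuousOn_tightnessGapLog : ContinuousOn tightnessGapLog (Ioo 0 (1 / 2)) :=
  fun _ hp => (hasDerivAt_tightnessGapLog_of_mem hp).continuousAt.continuousWithinAt

lemma strictMonoOn_tightnessGapLog : StrictMonoOn tightnessGapLog (Ioo 0 (1 / 2)) := by
  refine strictMonoOn_of_hasDerivWithinAt_pos (convex_Ioo 0 (1 / 2))
    continuousOn_tightnessGapLog (f' := tightnessGapLogDeriv) ?_ ?_ <;> rw [interior_Ioo]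
  · exact fun p hp => (hasDerivAt_tightnessGapLog_of_mem hp).hasDerivWithinAt
  · exact fun p hp => tightnessGapLogDeriv_pos hp.1 hp.2

lemma tightnessGapLog_one_fourth : tightnessGapLog (1 / 4) = -3 * log 2 - log 3 / 4 := by
  rw [tightnessGapLog, show (1 : ℝ) - 1 / 4 = 3 / 2 ^ 2 by norm_num,
    show (1 : ℝ) - 2 * (1 / 4) = 2⁻¹ by norm_num, show (1 : ℝ) / 4 = (2 ^ 2)⁻¹ by norm_num,
    log_inv, log_inv, log_div (by norm_num) (by norm_num), log_pow]
  push_cast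
  ring

lemma tightnessGapLog_two_fifths :
    tightnessGapLog (2 / 5) = 12 / 5 * log 2 - 2 / 5 * log 3 - log 5 := by
  rw [tightnessGapLog, show (1 : ℝ) - 2 / 5 = 3 / 5 by norm_num,
    show (1 : ℝ) - 2 * (2 / 5) = 5⁻¹ by norm_num, log_inv,
    log_div (by norm_num) (by norm_num), log_div (by norm_num) (by norm_num)]
  ring

lemma tightnessGapLog_one_fourth_lt : tightnessGapLog (1 / 4) < -log 2 := by
  have : 0 < log 2 := log_pos one_lt_two
  have : 0 < log 3 := log_pos (by norm_num)
  rw [tightnessGapLog_one_fourth]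
  linarith

lemma lt_tightnessGapLog_two_fifths : -log 2 < tightnessGapLog (2 / 5) := by
  have h : log ((3 : ℝ) ^ 2 * 5 ^ 5) < log (2 ^ 17) :=
    log_lt_log (by norm_num) (by norm_num)
  rw [log_mul (by norm_num) (by norm_num), log_pow, log_pow, log_pow] at h
  push_cast at h
  rw [tightnessGapLog_two_fifths]
  linarith

lemma tightnessGap_eq_of_mem {p : ℝ} (hp : p ∈ Ioo (0 : ℝ) (1 / 2)) :
    tightnessGap p = 1 + tightnessGapLog p / log 2 :=
  tightnessGap_eq hp.1.ne' (by linarith [hp.2]) (by linarith [hp.2])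

lemma strictMonoOn_tightnessGap : StrictMonoOn tightnessGap (Ioo 0 (1 / 2)) := by
  intro a ha b hb hab
  have hlog := strictMonoOn_tightnessGapLog ha hb hab
  rw [tightnessGap_eq_of_mem ha, tightnessGap_eq_of_mem hb]
  gcongr

lemma exists_tightnessGap_eq_zero : ∃ p ∈ Ioo (0 : ℝ) (1 / 2), tightnessGap p = 0 := by
  have hcont : ContinuousOn tightnessGapLog (Icc (1 / 4) (2 / 5)) :=
    continuousOn_tightnessGapLog.mono fun p hp => ⟨by linarith [hp.1], by linarith [hp.2]⟩
  obtain ⟨c, hc, hc₀⟩ := intermediate_value_Ioo (by norm_num) hcont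
    ⟨tightnessGapLog_one_fourth_lt, lt_tightnessGapLog_two_fifths⟩
  have hcI : c ∈ Ioo (0 : ℝ) (1 / 2) := ⟨by linarith [hc.1], by linarith [hc.2]⟩
  refine ⟨c, hcI, ?_⟩
  rw [tightnessGap_eq_of_mem hcI, hc₀, neg_div, div_self (log_pos one_lt_two).ne']
  ring

/-- `g(p) = 1 + 2 log₂(p/(1-p)) - log₂((1-2p)/(1-p)) - H₂(p)` is strictly increasing on
`(0, 1/2)` and has exactly one zero there. -/
theorem trapdoor_tightness_equation :
    StrictMonoOn
      (fun p : ℝ => 1 + 2 * Real.logb 2 (p / (1 - p))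
        - Real.logb 2 ((1 - 2 * p) / (1 - p)) - binEnt p)
      (Set.Ioo 0 (1 / 2)) ∧
    (∃! p : ℝ, p ∈ Set.Ioo (0 : ℝ) (1 / 2) ∧
      1 + 2 * Real.logb 2 (p / (1 - p))
        - Real.logb 2 ((1 - 2 * p) / (1 - p)) - binEnt p = 0) := by
  change StrictMonoOn tightnessGap _ ∧ ∃! p, p ∈ _ ∧ tightnessGap p = 0
  obtain ⟨c, hc, hc₀⟩ := exists_tightnessGap_eq_zero
  refine ⟨strictMonoOn_tightnessGap, c, ⟨hc, hc₀⟩, fun q ⟨hq, hq₀⟩ => ?_⟩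
  exact strictMonoOn_tightnessGap.injOn hq hc (hq₀.trans hc₀.symm)
end

section
/- For $p \in (1/2, 1)$, the quantity $\mu = \frac{(2p-1)\big[-(1+2p)(1-\log_2(2p^2-2p+1)) - 2\log_2(1-p) - 4p\log_2 p\big]}{(1-p)(2-p)}$ is nonnegative. -/
/-!
Put `q = 2p² - 2p + 1`. Multiplied by `log 2`, the bracket equals
`-2 log (2p(1-p)/q) - (2p-1) log (2p²/q)`, and `log x ≤ x - 1` bounds this from below by
`2(2p-1)²/q - (2p-1)²/q = (2p-1)²/q ≥ 0`.
-/

open Real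

lemma two_mul_sq_sub_two_mul_add_one_pos (p : ℝ) : 0 < 2 * p ^ 2 - 2 * p + 1 := by
  nlinarith [sq_nonneg (2 * p - 1)]

lemma two_mul_one_sub_sub_mul_le_neg_log {x y t : ℝ} (hx : 0 < x) (hy : 0 < y) (ht : 0 ≤ t) :
    2 * (1 - x) - t * (y - 1) ≤ -(2 * log x + t * log y) := by
  have hlx := log_le_sub_one_of_pos hx
  have hly := mul_le_mul_of_nonneg_left (log_le_sub_one_of_pos hy) ht
  linarith

lemma kkt_bracket_eq_log {p : ℝ} (hp0 : 0 < p) (hp1 : p < 1) :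
    -(1 + 2 * p) * (1 - logb 2 (2 * p ^ 2 - 2 * p + 1)) - 2 * logb 2 (1 - p)
        - 4 * p * logb 2 p =
      -(2 * log (2 * p * (1 - p) / (2 * p ^ 2 - 2 * p + 1))
        + (2 * p - 1) * log (2 * p ^ 2 / (2 * p ^ 2 - 2 * p + 1))) / log 2 := by
  have hq := two_mul_sq_sub_two_mul_add_one_pos p
  have h1p : 0 < 1 - p := by linarith
  rw [log_div (by positivity) hq.ne', log_div (by positivity) hq.ne',
    log_mul (by positivity) h1p.ne', log_mul two_ne_zero hp0.ne',
    log_mul two_ne_zero (by positivity), log_pow]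
  simp only [logb]
  field_simp [(log_pos one_lt_two).ne']
  push_cast
  ring

lemma kkt_bracket_nonneg_s8 {p : ℝ} (hp0 : 1 / 2 ≤ p) (hp1 : p < 1) :
    0 ≤ -(1 + 2 * p) * (1 - logb 2 (2 * p ^ 2 - 2 * p + 1)) - 2 * logb 2 (1 - p)
        - 4 * p * logb 2 p := by
  have hp : 0 < p := by linarith
  have h1p : 0 < 1 - p := by linarith
  rw [kkt_bracket_eq_log hp hp1]
  refine div_nonneg ?_ (log_pos one_lt_two).le
  have hq := two_mul_sq_sub_two_mul_add_one_pos p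
  generalize hqdef : 2 * p ^ 2 - 2 * p + 1 = q at hq ⊢
  have hlog := two_mul_one_sub_sub_mul_le_neg_log (x := 2 * p * (1 - p) / q)
    (y := 2 * p ^ 2 / q) (by positivity) (by positivity) (by linarith : (0 : ℝ) ≤ 2 * p - 1)
  have hlower : 2 * (1 - 2 * p * (1 - p) / q) - (2 * p - 1) * (2 * p ^ 2 / q - 1)
      = (2 * p - 1) ^ 2 / q := by
    field_simp
    rw [← hqdef]
    ring
  have hsq : 0 ≤ (2 * p - 1) ^ 2 / q := by positivity
  linarith

/-- Nonnegativity of the KKT multiplier `μ(1,1,0,0)` for the BFC of type II: for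
`p ∈ (1/2, 1)`, the displayed quantity is nonnegative. -/
theorem kkt_multiplier_nonneg (p : ℝ) (hp : p ∈ Set.Ioo (1 / 2 : ℝ) 1) :
    0 ≤ (2 * p - 1) *
        (-(1 + 2 * p) * (1 - Real.logb 2 (2 * p ^ 2 - 2 * p + 1))
          - 2 * Real.logb 2 (1 - p) - 4 * p * Real.logb 2 p) /
      ((1 - p) * (2 - p)) := by
  obtain ⟨hp0, hp1⟩ := hp
  have hbracket := kkt_bracket_nonneg_s8 hp0.le hp1
  have hden : 0 < (1 - p) * (2 - p) := mul_pos (by linarith) (by linarith)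
  exact div_nonneg (mul_nonneg (by linarith) hbracket) hden.le
end

section
/- The function $\psi(p) = \log_2\Big(\frac{2p^2-2p+1}{(1-p)^2}\Big) - 1 + \frac{2p(1-2p)}{2p^2-2p+1}$ is nonnegative for all $p \in [1/2, 1)$, and $\psi(1/2) = 0$. -/
/-!
Put `q = 2p² - 2p + 1` and `a = (2p - 1) / (2(1 - p)²) ≥ 0`, so that `q / (1 - p)² = 2(1 + a)` and
the bracket is `log₂ (1 + a) - 2p(2p - 1) / q`. Since `log 2 < 1`, `log₂ (1 + a) ≥ log (1 + a)`, and the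
first term of the series `log (1 + a) = ∑ 2 / (2k + 1) · (a / (a + 2))^(2k + 1)` gives
`log (1 + a) ≥ 2a / (a + 2) = 2(2p - 1) / (4p² - 6p + 3)`. This dominates `2p(2p - 1) / q` because
`q - p(4p² - 6p + 3) = (1 - p)(2p - 1)²`.
-/

open Real

theorem two_mul_div_add_two_le_log_one_add {a : ℝ} (ha : 0 ≤ a) :
    2 * a / (a + 2) ≤ log (1 + a) := by
  simpa [mul_div_assoc] using le_hasSum (hasSum_log_one_add ha) 0 fun k _ => by positivity

theorem log_le_logb_of_le_exp_one {b x : ℝ} (hb : 1 < b) (hbe : b ≤ exp 1) (hx : 1 ≤ x) :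
    log x ≤ logb b x :=
  le_div_self (log_nonneg hx) (log_pos hb) ((log_le_log (by linarith) hbe).trans_eq (log_exp 1))

theorem div_le_logb_two_div_sub_one {p : ℝ} (hp : p ∈ Set.Ico (1 / 2 : ℝ) 1) :
    2 * p * (2 * p - 1) / (2 * p ^ 2 - 2 * p + 1) ≤
      logb 2 ((2 * p ^ 2 - 2 * p + 1) / (1 - p) ^ 2) - 1 := by
  obtain ⟨hp_ge, hp_lt⟩ := hp
  have h1p : 0 < (1 - p) ^ 2 := by nlinarith
  have hq : 0 < 2 * p ^ 2 - 2 * p + 1 := by nlinarith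
  have hd : 0 < 4 * p ^ 2 - 6 * p + 3 := by nlinarith
  set a := (2 * p - 1) / (2 * (1 - p) ^ 2) with ha_def
  have ha : 0 ≤ a := div_nonneg (by linarith) (by positivity)
  have hsplit : (2 * p ^ 2 - 2 * p + 1) / (1 - p) ^ 2 = 2 * (1 + a) := by
    rw [ha_def]; field_simp; ring
  have hpade : 2 * a / (a + 2) = 2 * (2 * p - 1) / (4 * p ^ 2 - 6 * p + 3) := by
    rw [ha_def]; field_simp; ring
  have hpoly : 2 * p * (2 * p - 1) / (2 * p ^ 2 - 2 * p + 1) ≤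
      2 * (2 * p - 1) / (4 * p ^ 2 - 6 * p + 3) := by
    rw [div_le_div_iff₀ hq hd]
    have hgap : 0 ≤ 2 * (2 * p - 1) * ((1 - p) * (2 * p - 1) ^ 2) := by
      have : 0 ≤ 2 * p - 1 := by linarith
      have : 0 ≤ 1 - p := by linarith
      positivity
    linarith [show 2 * (2 * p - 1) * ((1 - p) * (2 * p - 1) ^ 2) =
      2 * (2 * p - 1) * (2 * p ^ 2 - 2 * p + 1) - 2 * p * (2 * p - 1) * (4 * p ^ 2 - 6 * p + 3)
      by ring]
  calc 2 * p * (2 * p - 1) / (2 * p ^ 2 - 2 * p + 1)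
      ≤ 2 * a / (a + 2) := hpade ▸ hpoly
    _ ≤ log (1 + a) := two_mul_div_add_two_le_log_one_add ha
    _ ≤ logb 2 (1 + a) := log_le_logb_of_le_exp_one one_lt_two
      (exp_one_gt_d9.le.trans' (by norm_num)) (by linarith)
    _ = logb 2 ((2 * p ^ 2 - 2 * p + 1) / (1 - p) ^ 2) - 1 := by
      rw [hsplit, logb_mul two_ne_zero (by positivity), logb_self_eq_one one_lt_two]; ring

/-- `ψ(p) = log₂((2p²-2p+1)/(1-p)²) - 1 + 2p(1-2p)/(2p²-2p+1)` is nonnegative on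
`[1/2, 1)` and vanishes at `p = 1/2`. -/
theorem kkt_bracket_nonneg :
    (∀ p ∈ Set.Ico (1 / 2 : ℝ) 1,
      0 ≤ Real.logb 2 ((2 * p ^ 2 - 2 * p + 1) / (1 - p) ^ 2) - 1
        + 2 * p * (1 - 2 * p) / (2 * p ^ 2 - 2 * p + 1)) ∧
    Real.logb 2 ((2 * (1 / 2 : ℝ) ^ 2 - 2 * (1 / 2) + 1) / (1 - 1 / 2) ^ 2) - 1
        + 2 * (1 / 2) * (1 - 2 * (1 / 2)) / (2 * (1 / 2 : ℝ) ^ 2 - 2 * (1 / 2) + 1) = 0 := by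
  refine ⟨fun p hp => ?_, by norm_num⟩
  have hbound := div_le_logb_two_div_sub_one hp
  rw [show 2 * p * (1 - 2 * p) = -(2 * p * (2 * p - 1)) by ring, neg_div]
  linarith
end
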